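/- Let R, C be positive integers, S > 0 a real number, and Υ ∈ [1, 1.52]. Suppose S/(RC) ≤ p_{ij} ≤ Υ·S/(RC) for all 1 ≤ i ≤ R, 1 ≤ j ≤ C. Define M' = (I_C − (1/C) D̄_2^{1/2} 1_C 1_C^T D̄_2^{−1/2}) (D̄_2^{−1/2} Z̄^T D̄_1^{−1/2}) (I_R − (1/R) D̄_1^{1/2} 1_R 1_R^T D̄_1^{−1/2}) (D̄_1^{−1/2} Z̄ D̄_2^{−1/2}) ∈ ℝ^{C×C}. Then ‖M'‖₂ ≤ 1 − 1/Υ³ + (Υ−1)², and this bound is at most 0.9857. -/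

import Mathlib

/-!
Write `A = D̄₁^{-1/2} Z̄ D̄₂^{-1/2}` and `w = D̄₂^{1/2} 1_C`. Since `Aᵀ D̄₁^{1/2} 1_R = w` and the
outer centering `Π = I − (1/C) D̄₂^{1/2} 1 1ᵀ D̄₂^{-1/2}` kills `w`, the inner centering drops out
and `M' = Π G` with `G = AᵀA`. As `G` is symmetric with `G w = w`, it preserves `w⊥`, and
`M' x = Π G y` for the component `y` of `x` orthogonal to `w`.

The entry bounds give `G ≥ Υ⁻³ w wᵀ / ‖w‖²` entrywise, and the Schur test applied to the
nonnegative matrix `G − Υ⁻³ w wᵀ / ‖w‖²`, whose Perron vector is `w`, bounds `G` on `w⊥` by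
`1 − Υ⁻³`. On `w⊥`, Cauchy–Schwarz bounds `‖Π‖²` by `‖w‖² (∑ⱼ wⱼ⁻²) / C²`; the column sums `wⱼ²`
lie within a factor `Υ` of each other, so the Kantorovich inequality bounds this by
`(1 + Υ)² / (4Υ)`. Finally `(1 − Υ⁻³) (1 + Υ) / (2√Υ) ≤ 1 − Υ⁻³ + (Υ − 1)²`.
-/

namespace CollapsedGibbs

/-- The ℓ²→ℓ² operator (spectral) norm of a real matrix. -/
noncomputable def l2OpNorm {m n : ℕ} (A : Matrix (Fin m) (Fin n) ℝ) : ℝ :=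
  ‖LinearMap.toContinuousLinearMap (Matrix.toEuclideanLin A)‖

/-- The matrix
`M' = (I_C − (1/C) D̄₂^{1/2} 1_C 1_Cᵀ D̄₂^{−1/2}) (D̄₂^{−1/2} Z̄ᵀ D̄₁^{−1/2})
      (I_R − (1/R) D̄₁^{1/2} 1_R 1_Rᵀ D̄₁^{−1/2}) (D̄₁^{−1/2} Z̄ D̄₂^{−1/2})`
built from a nonnegative matrix `Z̄ = (p_{ij})` with row sums `N̄_{i·}` and column
sums `N̄_{·j}`. -/
noncomputable def Mprime {R C : ℕ} (p : Fin R → Fin C → ℝ) : Matrix (Fin C) (Fin C) ℝ :=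
  let Nrow : Fin R → ℝ := fun i => ∑ j, p i j
  let Ncol : Fin C → ℝ := fun j => ∑ i, p i j
  ((1 : Matrix (Fin C) (Fin C) ℝ) -
      (C : ℝ)⁻¹ • (Matrix.diagonal (fun j => Real.sqrt (Ncol j))
        * Matrix.of (fun (_ _ : Fin C) => (1 : ℝ))
        * Matrix.diagonal (fun j => (Real.sqrt (Ncol j))⁻¹)))
    * (Matrix.diagonal (fun j => (Real.sqrt (Ncol j))⁻¹)
        * (Matrix.of p).transpose
        * Matrix.diagonal (fun i => (Real.sqrt (Nrow i))⁻¹))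
    * ((1 : Matrix (Fin R) (Fin R) ℝ) -
      (R : ℝ)⁻¹ • (Matrix.diagonal (fun i => Real.sqrt (Nrow i))
        * Matrix.of (fun (_ _ : Fin R) => (1 : ℝ))
        * Matrix.diagonal (fun i => (Real.sqrt (Nrow i))⁻¹)))
    * (Matrix.diagonal (fun i => (Real.sqrt (Nrow i))⁻¹)
        * Matrix.of p
        * Matrix.diagonal (fun j => (Real.sqrt (Ncol j))⁻¹))

open Matrix Finset

section LinearAlgebra

variable {ι m n : Type*} [Fintype ι] [Fintype m] [Fintype n]

theorem card_mul_le_sum {f : ι → ℝ} {a : ℝ} (h : ∀ i, a ≤ f i) :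
    Fintype.card ι * a ≤ ∑ i, f i := by
  simpa using card_nsmul_le_sum univ f a fun i _ => h i

theorem sum_le_card_mul {f : ι → ℝ} {a : ℝ} (h : ∀ i, f i ≤ a) :
    ∑ i, f i ≤ Fintype.card ι * a := by
  simpa using sum_le_card_nsmul univ f a fun i _ => h i

/-- **Kantorovich inequality**. -/
theorem sum_mul_sum_inv_mul_le {d : ι → ℝ} {a κ : ℝ} (ha : 0 < a) (hlo : ∀ i, a ≤ d i)
    (hhi : ∀ i, d i ≤ κ * a) :
    (∑ i, d i) * (∑ i, (d i)⁻¹) * (4 * κ) ≤ (Fintype.card ι : ℝ) ^ 2 * (1 + κ) ^ 2 := by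
  have hd : ∀ i, 0 < d i := fun i => ha.trans_le (hlo i)
  have hterm : ∀ i, κ * a ^ 2 * (d i)⁻¹ ≤ (1 + κ) * a - d i := by
    intro i
    rw [← sub_nonneg]
    have key : (1 + κ) * a - d i - κ * a ^ 2 * (d i)⁻¹ = (d i - a) * (κ * a - d i) / d i := by
      field_simp [(hd i).ne']
      ring
    rw [key]
    exact div_nonneg (mul_nonneg (sub_nonneg.2 (hlo i)) (sub_nonneg.2 (hhi i))) (hd i).le
  have hsum : ∑ i, d i + κ * a ^ 2 * ∑ i, (d i)⁻¹ ≤ Fintype.card ι * ((1 + κ) * a) := by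
    have := sum_le_sum fun i (_ : i ∈ univ) => hterm i
    rw [← mul_sum, sum_sub_distrib, sum_const, card_univ, nsmul_eq_mul] at this
    linarith
  have hnonneg : 0 ≤ κ * a ^ 2 * ∑ i, (d i)⁻¹ := by
    rw [mul_sum]
    refine sum_nonneg fun i _ => ?_
    have hκa : 0 ≤ κ * a := (hd i).le.trans (hhi i)
    rw [sq, ← mul_assoc]
    exact mul_nonneg (mul_nonneg hκa ha.le) (inv_nonneg.2 (hd i).le)
  have hamgm := four_mul_le_sq_add (∑ i, d i) (κ * a ^ 2 * ∑ i, (d i)⁻¹)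
  have hsq := pow_le_pow_left₀ (add_nonneg (sum_nonneg fun i _ => (hd i).le) hnonneg) hsum 2
  have ha2 : 0 < a ^ 2 := by positivity
  nlinarith

/-- **Schur test.** -/
theorem dotProduct_mulVec_self_le_of_schur {B : Matrix m n ℝ} (hB : ∀ i j, 0 ≤ B i j)
    {u : m → ℝ} {v : n → ℝ} (hv : ∀ j, 0 < v j) {α β : ℝ} (hα : 0 ≤ α)
    (hrow : B *ᵥ v ≤ α • u) (hcol : Bᵀ *ᵥ u ≤ β • v) (x : n → ℝ) :
    (B *ᵥ x) ⬝ᵥ (B *ᵥ x) ≤ α * β * (x ⬝ᵥ x) := by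
  have hrow_le : ∀ i, (B *ᵥ x) i ^ 2 ≤ α * u i * ∑ j, B i j * (x j ^ 2 / v j) := by
    intro i
    have hcs : (B *ᵥ x) i ^ 2 ≤ (B *ᵥ v) i * ∑ j, B i j * (x j ^ 2 / v j) :=
      sum_sq_le_sum_mul_sum_of_sq_le_mul _
        (fun j _ => mul_nonneg (hB i j) (hv j).le)
        (fun j _ => mul_nonneg (hB i j) (div_nonneg (sq_nonneg _) (hv j).le))
        (fun j _ => le_of_eq <| by field_simp [(hv j).ne'])
    exact hcs.trans (mul_le_mul_of_nonneg_right (hrow i)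
      (sum_nonneg fun j _ => mul_nonneg (hB i j) (div_nonneg (sq_nonneg _) (hv j).le)))
  calc (B *ᵥ x) ⬝ᵥ (B *ᵥ x) = ∑ i, (B *ᵥ x) i ^ 2 := by simp only [dotProduct, sq]
    _ ≤ ∑ i, α * u i * ∑ j, B i j * (x j ^ 2 / v j) := sum_le_sum fun i _ => hrow_le i
    _ = α * ∑ j, (x j ^ 2 / v j) * (Bᵀ *ᵥ u) j := by
      simp only [mulVec, dotProduct, transpose_apply, mul_sum]
      rw [sum_comm]
      exact sum_congr rfl fun j _ => sum_congr rfl fun i _ => by ring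
    _ ≤ α * ∑ j, (x j ^ 2 / v j) * (β * v j) := by
      gcongr with j
      · exact div_nonneg (sq_nonneg _) (hv j).le
      · exact hcol j
    _ = α * β * (x ⬝ᵥ x) := by
      simp only [dotProduct, mul_sum]
      exact sum_congr rfl fun j _ => by field_simp [(hv j).ne']

theorem dotProduct_sub_smul_eq_zero {w : ι → ℝ} (hw : w ⬝ᵥ w ≠ 0) (x : ι → ℝ) :
    w ⬝ᵥ (x - ((w ⬝ᵥ x) / (w ⬝ᵥ w)) • w) = 0 := by
  rw [dotProduct_sub, dotProduct_smul, smul_eq_mul, div_mul_cancel₀ _ hw, sub_self]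

theorem dotProduct_self_sub_smul_le (w x : ι → ℝ) :
    (x - ((w ⬝ᵥ x) / (w ⬝ᵥ w)) • w) ⬝ᵥ (x - ((w ⬝ᵥ x) / (w ⬝ᵥ w)) • w) ≤ x ⬝ᵥ x := by
  simp only [sub_dotProduct, dotProduct_sub, smul_dotProduct, dotProduct_smul, smul_eq_mul,
    dotProduct_comm x w]
  have hW : 0 ≤ w ⬝ᵥ w := dotProduct_self_star_nonneg w
  rcases hW.eq_or_lt with hW | hW
  · simp [← hW]
  · have : 0 ≤ (w ⬝ᵥ x) ^ 2 / (w ⬝ᵥ w) := by positivity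
    field_simp
    nlinarith

/-- Subtracting `c w wᵀ` leaves a nonnegative matrix with Perron vector `w` for the eigenvalue
`1 - c ‖w‖²`, to which the Schur test applies; on `w⊥` the subtraction does not change `G`. -/
theorem dotProduct_mulVec_self_le_of_orthogonal {G : Matrix ι ι ℝ} (hG : Gᵀ = G) {w : ι → ℝ}
    (hw : ∀ i, 0 < w i) (hGw : G *ᵥ w = w) {c : ℝ} (hc : ∀ i j, c * (w i * w j) ≤ G i j)
    (hcw : c * (w ⬝ᵥ w) ≤ 1) {y : ι → ℝ} (hy : w ⬝ᵥ y = 0) :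
    (G *ᵥ y) ⬝ᵥ (G *ᵥ y) ≤ (1 - c * (w ⬝ᵥ w)) ^ 2 * (y ⬝ᵥ y) := by
  set B := G - c • vecMulVec w w
  have hBy : B *ᵥ y = G *ᵥ y := by simp [B, sub_mulVec, smul_mulVec, vecMulVec_mulVec, hy]
  have hBw : B *ᵥ w = (1 - c * (w ⬝ᵥ w)) • w := by
    simp [B, sub_mulVec, smul_mulVec, vecMulVec_mulVec, hGw, sub_smul, smul_smul]
  have hBt : Bᵀ = B := by simp [B, transpose_vecMulVec, hG]
  have hB : ∀ i j, 0 ≤ B i j := fun i j => by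
    simpa [B, vecMulVec_apply] using hc i j
  rw [← hBy, sq]
  refine dotProduct_mulVec_self_le_of_schur hB hw (sub_nonneg.2 hcw) hBw.le ?_ y
  rw [hBt, hBw]

variable [DecidableEq ι]

/-- The oblique centering `I - (1/n) D^{1/2} 1 1ᵀ D^{-1/2}`, with `w` the diagonal of `D^{1/2}`. -/
noncomputable def scaledCentering (w : ι → ℝ) : Matrix ι ι ℝ :=
  1 - (Fintype.card ι : ℝ)⁻¹ •
    (diagonal w * of (fun _ _ => (1 : ℝ)) * diagonal fun i => (w i)⁻¹)

theorem scaledCentering_mulVec (w u : ι → ℝ) :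
    scaledCentering w *ᵥ u = u - ((Fintype.card ι : ℝ)⁻¹ * ∑ i, (w i)⁻¹ * u i) • w := by
  ext j
  simp only [scaledCentering, sub_mulVec, one_mulVec, smul_mulVec, ← mulVec_mulVec]
  simp [mulVec, dotProduct, mul_sum, mul_assoc, mul_left_comm, mul_comm]

theorem scaledCentering_mulVec_self {w : ι → ℝ} (hw : ∀ i, w i ≠ 0) :
    scaledCentering w *ᵥ w = 0 := by
  rcases isEmpty_or_nonempty ι with hι | hι
  · exact Subsingleton.elim _ _
  have hcard : (Fintype.card ι : ℝ) ≠ 0 := by positivity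
  simp [scaledCentering_mulVec, inv_mul_cancel₀ (hw _), hcard]

theorem sq_card_mul_dotProduct_scaledCentering_mulVec_le {w z : ι → ℝ} (hw : ∀ i, w i ≠ 0)
    (hz : w ⬝ᵥ z = 0) :
    (Fintype.card ι : ℝ) ^ 2 * ((scaledCentering w *ᵥ z) ⬝ᵥ (scaledCentering w *ᵥ z)) ≤
      (w ⬝ᵥ w) * (∑ i, (w i ^ 2)⁻¹) * (z ⬝ᵥ z) := by
  rcases isEmpty_or_nonempty ι with hι | hι
  · simp
  set n : ℝ := (Fintype.card ι : ℝ)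
  set σ := ∑ i, (w i)⁻¹ * z i
  have hn : 0 < n := by positivity
  have hW : 0 < w ⬝ᵥ w := by
    simp only [dotProduct]
    exact sum_pos (fun i _ => mul_self_pos.2 (hw i)) univ_nonempty
  have hnorm : (scaledCentering w *ᵥ z) ⬝ᵥ (scaledCentering w *ᵥ z) =
      z ⬝ᵥ z + (n⁻¹ * σ) ^ 2 * (w ⬝ᵥ w) := by
    rw [scaledCentering_mulVec]
    simp only [sub_dotProduct, dotProduct_sub, smul_dotProduct, dotProduct_smul, smul_eq_mul,
      dotProduct_comm z w, hz]
    ring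
  -- Cauchy–Schwarz against the component of `w⁻¹` orthogonal to `w`
  have hσ : σ = ∑ i, z i * ((w i)⁻¹ - n / (w ⬝ᵥ w) * w i) := by
    have : ∑ i, z i * w i = 0 := by rw [← hz, dotProduct_comm]; rfl
    simp only [mul_sub, sum_sub_distrib, mul_left_comm (z _), ← mul_sum, this, mul_zero, sub_zero,
      σ, mul_comm (w _)⁻¹]
  have hcs : σ ^ 2 ≤ (z ⬝ᵥ z) * ∑ i, ((w i)⁻¹ - n / (w ⬝ᵥ w) * w i) ^ 2 := by
    have hzz : z ⬝ᵥ z = ∑ i, z i ^ 2 := by simp only [dotProduct, sq]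
    rw [hσ, hzz]
    exact sum_mul_sq_le_sq_mul_sq _ _ _
  have hE : ∑ i, ((w i)⁻¹ - n / (w ⬝ᵥ w) * w i) ^ 2 = ∑ i, (w i ^ 2)⁻¹ - n ^ 2 / (w ⬝ᵥ w) := by
    have hterm : ∀ i, ((w i)⁻¹ - n / (w ⬝ᵥ w) * w i) ^ 2 =
        (w i ^ 2)⁻¹ - 2 * n / (w ⬝ᵥ w) + (n / (w ⬝ᵥ w)) ^ 2 * (w i * w i) := fun i => by
      field_simp [hw i]
      ring
    simp only [sum_congr rfl fun i _ => hterm i, sum_add_distrib, sum_sub_distrib, ← mul_sum,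
      sum_const, card_univ, nsmul_eq_mul]
    rw [← dotProduct]
    field_simp
    ring
  rw [hE] at hcs
  calc n ^ 2 * ((scaledCentering w *ᵥ z) ⬝ᵥ (scaledCentering w *ᵥ z))
      = n ^ 2 * (z ⬝ᵥ z) + σ ^ 2 * (w ⬝ᵥ w) := by
        rw [hnorm]
        field_simp
    _ ≤ n ^ 2 * (z ⬝ᵥ z) + (z ⬝ᵥ z) * (∑ i, (w i ^ 2)⁻¹ - n ^ 2 / (w ⬝ᵥ w)) * (w ⬝ᵥ w) := by
        gcongr
    _ = (w ⬝ᵥ w) * (∑ i, (w i ^ 2)⁻¹) * (z ⬝ᵥ z) := by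
        field_simp
        ring

end LinearAlgebra

section Normalized

variable {m n : Type*} [Fintype m] [Fintype n]

noncomputable def sqrtRowSum (p : Matrix m n ℝ) : m → ℝ := fun i => √(∑ j, p i j)

noncomputable def sqrtColSum (p : Matrix m n ℝ) : n → ℝ := fun j => √(∑ i, p i j)

theorem sqrtColSum_dotProduct_self {p : Matrix m n ℝ} (hcol : ∀ j, 0 ≤ ∑ i, p i j) :
    sqrtColSum p ⬝ᵥ sqrtColSum p = ∑ j, ∑ i, p i j := by
  simp only [dotProduct, sqrtColSum, Real.mul_self_sqrt (hcol _)]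

theorem sqrtColSum_dotProduct_self_mul_sum_inv_sq_le [Nonempty m] {p : Matrix m n ℝ} {s Υ : ℝ}
    (hs : 0 < s) (hlo : ∀ i j, s ≤ p i j) (hhi : ∀ i j, p i j ≤ Υ * s) :
    (sqrtColSum p ⬝ᵥ sqrtColSum p) * (∑ j, (sqrtColSum p j ^ 2)⁻¹) * (4 * Υ) ≤
      (Fintype.card n : ℝ) ^ 2 * (1 + Υ) ^ 2 := by
  have hcol : ∀ j, 0 ≤ ∑ i, p i j := fun j => sum_nonneg fun i _ => hs.le.trans (hlo i j)
  simp only [sqrtColSum_dotProduct_self hcol, sqrtColSum, Real.sq_sqrt (hcol _)]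
  exact sum_mul_sum_inv_mul_le (mul_pos (by positivity) hs) (card_mul_le_sum fun i => hlo i ·)
    fun j => by simpa [mul_left_comm] using sum_le_card_mul fun i => hhi i j

variable [DecidableEq m] [DecidableEq n]

/-- `D̄₁^{-1/2} Z̄ D̄₂^{-1/2}`. -/
noncomputable def normalized (p : Matrix m n ℝ) : Matrix m n ℝ :=
  diagonal (fun i => (sqrtRowSum p i)⁻¹) * p * diagonal fun j => (sqrtColSum p j)⁻¹

noncomputable def gram (p : Matrix m n ℝ) : Matrix n n ℝ := (normalized p)ᵀ * normalized p

variable {p : Matrix m n ℝ}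

theorem normalized_apply (i : m) (j : n) :
    normalized p i j = p i j / (sqrtRowSum p i * sqrtColSum p j) := by
  simp only [normalized, mul_diagonal, diagonal_mul]
  field_simp

theorem normalized_transpose : (normalized p)ᵀ = normalized pᵀ := by
  simp [normalized, transpose_mul, Matrix.mul_assoc, sqrtRowSum, sqrtColSum]

theorem gram_transpose : (gram p)ᵀ = gram p := by
  simp [gram, transpose_mul]

theorem normalized_mulVec_sqrtColSum (hcol : ∀ j, 0 < ∑ i, p i j) :
    normalized p *ᵥ sqrtColSum p = sqrtRowSum p := by
  have hw : ∀ j, sqrtColSum p j ≠ 0 := fun j => (Real.sqrt_pos.2 (hcol j)).ne'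
  have hone : (diagonal fun j => (sqrtColSum p j)⁻¹) *ᵥ sqrtColSum p = 1 := by
    ext j
    simp [mulVec_diagonal, inv_mul_cancel₀ (hw j)]
  ext i
  rw [normalized, ← mulVec_mulVec, ← mulVec_mulVec, hone, mulVec_diagonal]
  simp only [mulVec, dotProduct, Pi.one_apply, mul_one]
  rw [← div_eq_inv_mul, sqrtRowSum, Real.div_sqrt]

theorem normalized_transpose_mulVec_sqrtRowSum (hrow : ∀ i, 0 < ∑ j, p i j) :
    (normalized p)ᵀ *ᵥ sqrtRowSum p = sqrtColSum p := by
  rw [normalized_transpose]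
  exact normalized_mulVec_sqrtColSum hrow

theorem gram_mulVec_sqrtColSum (hrow : ∀ i, 0 < ∑ j, p i j) (hcol : ∀ j, 0 < ∑ i, p i j) :
    gram p *ᵥ sqrtColSum p = sqrtColSum p := by
  rw [gram, ← mulVec_mulVec, normalized_mulVec_sqrtColSum hcol,
    normalized_transpose_mulVec_sqrtRowSum hrow]

theorem gram_apply (hrow : ∀ i, 0 ≤ ∑ j, p i j) (j k : n) :
    gram p j k = (∑ i, p i j * p i k / ∑ l, p i l) / (sqrtColSum p j * sqrtColSum p k) := by
  simp only [gram, mul_apply, transpose_apply, normalized_apply, sum_div]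
  refine sum_congr rfl fun i _ => ?_
  rw [← Real.sq_sqrt (hrow i), sqrtRowSum]
  field_simp

theorem scaledCentering_mul_normalized_transpose_mul_scaledCentering
    (hrow : ∀ i, 0 < ∑ j, p i j) (hcol : ∀ j, 0 < ∑ i, p i j) :
    scaledCentering (sqrtColSum p) * (normalized p)ᵀ * scaledCentering (sqrtRowSum p) =
      scaledCentering (sqrtColSum p) * (normalized p)ᵀ := by
  refine ext_iff_mulVec.2 fun u => ?_
  simp only [← mulVec_mulVec]
  rw [scaledCentering_mulVec (sqrtRowSum p), mulVec_sub, mulVec_smul,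
    normalized_transpose_mulVec_sqrtRowSum hrow, mulVec_sub, mulVec_smul,
    scaledCentering_mulVec_self (w := sqrtColSum p) fun j => (Real.sqrt_pos.2 (hcol j)).ne',
    smul_zero, sub_zero]

end Normalized

section EntryBounds

variable {m n : Type*} [Fintype m] [Fintype n] [DecidableEq m] [DecidableEq n]
  [Nonempty m] {p : Matrix m n ℝ} {s Υ : ℝ}

theorem inv_pow_three_div_mul_le_gram_apply (hs : 0 < s) (hlo : ∀ i j, s ≤ p i j)
    (hhi : ∀ i j, p i j ≤ Υ * s) (j k : n) :
    (Υ ^ 3)⁻¹ / (sqrtColSum p ⬝ᵥ sqrtColSum p) * (sqrtColSum p j * sqrtColSum p k) ≤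
      gram p j k := by
  set cm : ℝ := (Fintype.card m : ℝ)
  set cn : ℝ := (Fintype.card n : ℝ)
  have : Nonempty n := ⟨j⟩
  have hp : ∀ i j, 0 < p i j := fun i j => hs.trans_le (hlo i j)
  have hΥ : 0 < Υ := pos_of_mul_pos_left ((hp (Classical.arbitrary m) j).trans_le (hhi _ j)) hs.le
  have hcol_ge : ∀ j, cm * s ≤ ∑ i, p i j := fun j => card_mul_le_sum fun i => hlo i j
  have hcol_pos : ∀ j, 0 < ∑ i, p i j := fun j => (by positivity : 0 < cm * s).trans_le (hcol_ge j)
  have hW : cn * (cm * s) ≤ sqrtColSum p ⬝ᵥ sqrtColSum p := by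
    rw [sqrtColSum_dotProduct_self fun j => (hcol_pos j).le]
    exact card_mul_le_sum hcol_ge
  have hW_pos : 0 < sqrtColSum p ⬝ᵥ sqrtColSum p := lt_of_lt_of_le (by positivity) hW
  have hterm : ∀ i, s / (cn * Υ) ≤ p i j * p i k / ∑ l, p i l := fun i => by
    calc s / (cn * Υ) = s * s / (cn * (Υ * s)) := by field_simp
      _ ≤ p i j * p i k / ∑ l, p i l :=
        div_le_div₀ (mul_pos (hp i j) (hp i k)).le (mul_le_mul (hlo i j) (hlo i k) hs.le
          (hp i j).le) (sum_pos (fun l _ => hp i l) univ_nonempty)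
          (sum_le_card_mul fun l => hhi i l)
  have hsq : sqrtColSum p j * sqrtColSum p k * (sqrtColSum p j * sqrtColSum p k) =
      (∑ i, p i j) * ∑ i, p i k := by
    simp only [mul_mul_mul_comm, sqrtColSum, Real.mul_self_sqrt (hcol_pos _).le]
  have hwjk : 0 < sqrtColSum p j * sqrtColSum p k :=
    mul_pos (Real.sqrt_pos.2 (hcol_pos j)) (Real.sqrt_pos.2 (hcol_pos k))
  rw [gram_apply fun i => (sum_pos (fun l _ => hp i l) univ_nonempty).le, le_div_iff₀ hwjk,
    mul_assoc, hsq]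
  calc (Υ ^ 3)⁻¹ / (sqrtColSum p ⬝ᵥ sqrtColSum p) * ((∑ i, p i j) * ∑ i, p i k)
      ≤ (Υ ^ 3)⁻¹ / (sqrtColSum p ⬝ᵥ sqrtColSum p) * ((cm * (Υ * s)) * (cm * (Υ * s))) := by
        refine mul_le_mul_of_nonneg_left ?_ (div_nonneg (by positivity) hW_pos.le)
        exact mul_le_mul (sum_le_card_mul fun i => hhi i j) (sum_le_card_mul fun i => hhi i k)
          (hcol_pos k).le (by positivity)
    _ = cm * s * (cm * s) / (Υ * (sqrtColSum p ⬝ᵥ sqrtColSum p)) := by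
        field_simp
    _ ≤ cm * s * (cm * s) / (Υ * (cn * (cm * s))) := by gcongr
    _ = cm * (s / (cn * Υ)) := by
        field_simp
    _ ≤ _ := card_mul_le_sum hterm

theorem dotProduct_gram_mulVec_self_le [Nonempty n] (hs : 0 < s) (hlo : ∀ i j, s ≤ p i j)
    (hhi : ∀ i j, p i j ≤ Υ * s) {y : n → ℝ} (hy : sqrtColSum p ⬝ᵥ y = 0) :
    (gram p *ᵥ y) ⬝ᵥ (gram p *ᵥ y) ≤ (1 - (Υ ^ 3)⁻¹) ^ 2 * (y ⬝ᵥ y) := by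
  have hp : ∀ i j, 0 < p i j := fun i j => hs.trans_le (hlo i j)
  have hΥ : 1 ≤ Υ := le_of_mul_le_mul_right
    (by simpa using (hlo (Classical.arbitrary m) (Classical.arbitrary n)).trans (hhi _ _)) hs
  have hrow : ∀ i, 0 < ∑ j, p i j := fun i => sum_pos (fun j _ => hp i j) univ_nonempty
  have hcol : ∀ j, 0 < ∑ i, p i j := fun j => sum_pos (fun i _ => hp i j) univ_nonempty
  have hW : 0 < sqrtColSum p ⬝ᵥ sqrtColSum p := by
    rw [sqrtColSum_dotProduct_self fun j => (hcol j).le]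
    exact sum_pos (fun j _ => hcol j) univ_nonempty
  have := dotProduct_mulVec_self_le_of_orthogonal gram_transpose
    (w := sqrtColSum p) (fun j => Real.sqrt_pos.2 (hcol j)) (gram_mulVec_sqrtColSum hrow hcol)
    (inv_pow_three_div_mul_le_gram_apply hs hlo hhi) ?_ hy
  · rwa [div_mul_cancel₀ _ hW.ne'] at this
  · rw [div_mul_cancel₀ _ hW.ne']
    exact inv_le_one_of_one_le₀ (one_le_pow₀ hΥ)

theorem dotProduct_scaledCentering_gram_mulVec_le [Nonempty n] (hs : 0 < s)
    (hlo : ∀ i j, s ≤ p i j) (hhi : ∀ i j, p i j ≤ Υ * s) (x : n → ℝ) :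
    (scaledCentering (sqrtColSum p) *ᵥ (gram p *ᵥ x)) ⬝ᵥ
        (scaledCentering (sqrtColSum p) *ᵥ (gram p *ᵥ x)) ≤
      (1 - (Υ ^ 3)⁻¹) ^ 2 * ((1 + Υ) ^ 2 / (4 * Υ)) * (x ⬝ᵥ x) := by
  have hp : ∀ i j, 0 < p i j := fun i j => hs.trans_le (hlo i j)
  have hrow : ∀ i, 0 < ∑ j, p i j := fun i => sum_pos (fun j _ => hp i j) univ_nonempty
  have hcol : ∀ j, 0 < ∑ i, p i j := fun j => sum_pos (fun i _ => hp i j) univ_nonempty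
  have hΥ : 0 < Υ := pos_of_mul_pos_left
    ((hp (Classical.arbitrary m) (Classical.arbitrary n)).trans_le (hhi _ _)) hs.le
  have hGw := gram_mulVec_sqrtColSum hrow hcol
  set w := sqrtColSum p
  have hw : ∀ j, w j ≠ 0 := fun j => (Real.sqrt_pos.2 (hcol j)).ne'
  have hW : 0 < w ⬝ᵥ w := by
    simp only [dotProduct]
    exact sum_pos (fun j _ => mul_self_pos.2 (hw j)) univ_nonempty
  set y := x - ((w ⬝ᵥ x) / (w ⬝ᵥ w)) • w
  have hy : w ⬝ᵥ y = 0 := dotProduct_sub_smul_eq_zero hW.ne' x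
  have hGx : scaledCentering w *ᵥ (gram p *ᵥ x) = scaledCentering w *ᵥ (gram p *ᵥ y) := by
    rw [mulVec_sub, mulVec_smul, hGw, mulVec_sub, mulVec_smul, scaledCentering_mulVec_self hw,
      smul_zero, sub_zero]
  have hz : w ⬝ᵥ (gram p *ᵥ y) = 0 := by
    rw [dotProduct_mulVec, ← mulVec_transpose, gram_transpose, hGw, hy]
  set z := gram p *ᵥ y
  have hproj := sq_card_mul_dotProduct_scaledCentering_mulVec_le hw hz
  have hkant := sqrtColSum_dotProduct_self_mul_sum_inv_sq_le hs hlo hhi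
  have hGy : z ⬝ᵥ z ≤ (1 - (Υ ^ 3)⁻¹) ^ 2 * (x ⬝ᵥ x) :=
    (dotProduct_gram_mulVec_self_le hs hlo hhi hy).trans
      (by gcongr; exact dotProduct_self_sub_smul_le w x)
  rw [hGx]
  refine le_of_mul_le_mul_left ?_ (by positivity : 0 < (Fintype.card n : ℝ) ^ 2 * (4 * Υ))
  calc (Fintype.card n : ℝ) ^ 2 * (4 * Υ) * ((scaledCentering w *ᵥ z) ⬝ᵥ (scaledCentering w *ᵥ z))
      = 4 * Υ * ((Fintype.card n : ℝ) ^ 2 *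
          ((scaledCentering w *ᵥ z) ⬝ᵥ (scaledCentering w *ᵥ z))) := by ring
    _ ≤ 4 * Υ * ((w ⬝ᵥ w) * (∑ j, (w j ^ 2)⁻¹) * (z ⬝ᵥ z)) := by gcongr
    _ = (w ⬝ᵥ w) * (∑ j, (w j ^ 2)⁻¹) * (4 * Υ) * (z ⬝ᵥ z) := by ring
    _ ≤ (Fintype.card n : ℝ) ^ 2 * (1 + Υ) ^ 2 * ((1 - (Υ ^ 3)⁻¹) ^ 2 * (x ⬝ᵥ x)) :=
        mul_le_mul hkant hGy (dotProduct_self_star_nonneg z) (by positivity)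
    _ = _ := by field_simp

end EntryBounds

theorem l2OpNorm_le_of_dotProduct_le {m n : ℕ} {A : Matrix (Fin m) (Fin n) ℝ} {K : ℝ}
    (hK : 0 ≤ K) (h : ∀ x, (A *ᵥ x) ⬝ᵥ (A *ᵥ x) ≤ K ^ 2 * (x ⬝ᵥ x)) : l2OpNorm A ≤ K := by
  have hnorm : ∀ {k : ℕ} (v : EuclideanSpace ℝ (Fin k)), ‖v‖ ^ 2 = v.ofLp ⬝ᵥ v.ofLp := by
    intro k v
    rw [← real_inner_self_eq_norm_sq, EuclideanSpace.inner_eq_star_dotProduct, star_trivial]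
  refine ContinuousLinearMap.opNorm_le_bound _ hK fun x => ?_
  refine le_of_pow_le_pow_left₀ two_ne_zero (by positivity) ?_
  rw [mul_pow, hnorm, hnorm]
  exact h x.ofLp

theorem Mprime_eq {R C : ℕ} (p : Fin R → Fin C → ℝ) :
    Mprime p = scaledCentering (sqrtColSum (of p)) * (normalized (of p))ᵀ *
      scaledCentering (sqrtRowSum (of p)) * normalized (of p) := by
  unfold Mprime scaledCentering normalized sqrtRowSum sqrtColSum
  simp [transpose_mul, Matrix.mul_assoc]

theorem Mprime_eq_scaledCentering_mul_gram {R C : ℕ} {p : Fin R → Fin C → ℝ}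
    (hrow : ∀ i, 0 < ∑ j, p i j) (hcol : ∀ j, 0 < ∑ i, p i j) :
    Mprime p = scaledCentering (sqrtColSum (of p)) * gram (of p) := by
  rw [Mprime_eq, scaledCentering_mul_normalized_transpose_mul_scaledCentering (p := of p) hrow hcol,
    gram, Matrix.mul_assoc]

theorem sq_mul_one_add_sq_div_le {r Υ : ℝ} (hr₀ : 0 ≤ r) (hr₁ : r ≤ 1) (hΥ : 1 ≤ Υ) :
    r ^ 2 * ((1 + Υ) ^ 2 / (4 * Υ)) ≤ (r + (Υ - 1) ^ 2) ^ 2 := by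
  rw [mul_div_assoc', div_le_iff₀ (by positivity)]
  -- the difference is `(Υ - 1)² (8Υr + 4Υ(Υ - 1)² - r²)`
  nlinarith [mul_nonneg (sq_nonneg (Υ - 1)) (mul_nonneg hr₀ (by linarith : 0 ≤ 8 * Υ - r)),
    mul_nonneg (sq_nonneg (Υ - 1)) (mul_nonneg (by linarith : (0:ℝ) ≤ Υ) (sq_nonneg (Υ - 1)))]

theorem one_sub_one_div_pow_three_add_sq_le {Υ : ℝ} (h₁ : 1 ≤ Υ) (h₂ : Υ ≤ 1.52) :
    1 - 1 / Υ ^ 3 + (Υ - 1) ^ 2 ≤ 0.9857 := by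
  have hprod : Υ ^ 3 * ((Υ - 1) ^ 2 + 0.0143) ≤ 1 :=
    calc Υ ^ 3 * ((Υ - 1) ^ 2 + 0.0143) ≤ 1.52 ^ 3 * (0.52 ^ 2 + 0.0143) := by
          gcongr
          linarith
      _ ≤ 1 := by norm_num
  have : (Υ - 1) ^ 2 + 0.0143 ≤ 1 / Υ ^ 3 := by
    rw [le_div_iff₀ (by positivity)]
    linarith
  linarith

/-- **Spectral-norm bound for `M'` in the second regime.**  If `Υ ∈ [1, 1.52]` and
`S/(RC) ≤ p_{ij} ≤ Υ·S/(RC)`, then `‖M'‖₂ ≤ 1 − 1/Υ³ + (Υ−1)² ≤ 0.9857`. -/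
theorem Mprime_l2OpNorm_le
    (R C : ℕ) (hR : 0 < R) (hC : 0 < C) (S : ℝ) (hS : 0 < S)
    (Υ : ℝ) (hΥ : Υ ∈ Set.Icc (1 : ℝ) 1.52)
    (p : Fin R → Fin C → ℝ)
    (hp1 : ∀ i j, S / (R * C) ≤ p i j)
    (hp2 : ∀ i j, p i j ≤ Υ * S / (R * C)) :
    l2OpNorm (Mprime p) ≤ 1 - 1 / Υ ^ 3 + (Υ - 1) ^ 2 ∧
      1 - 1 / Υ ^ 3 + (Υ - 1) ^ 2 ≤ 0.9857 := by
  obtain ⟨hΥ₁, hΥ₂⟩ := hΥ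
  have : Nonempty (Fin R) := ⟨⟨0, hR⟩⟩
  have : Nonempty (Fin C) := ⟨⟨0, hC⟩⟩
  have hs : 0 < S / (R * C) := by positivity
  have hp : ∀ i j, 0 < p i j := fun i j => hs.trans_le (hp1 i j)
  have hr₀ : 0 ≤ 1 - (Υ ^ 3)⁻¹ := sub_nonneg.2 (inv_le_one_of_one_le₀ (one_le_pow₀ hΥ₁))
  have hK : 0 ≤ 1 - 1 / Υ ^ 3 + (Υ - 1) ^ 2 := by
    rw [one_div]
    exact add_nonneg hr₀ (sq_nonneg _)
  refine ⟨l2OpNorm_le_of_dotProduct_le hK fun x => ?_, one_sub_one_div_pow_three_add_sq_le hΥ₁ hΥ₂⟩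
  rw [Mprime_eq_scaledCentering_mul_gram (fun i => sum_pos (fun j _ => hp i j) univ_nonempty)
    (fun j => sum_pos (fun i _ => hp i j) univ_nonempty), ← mulVec_mulVec, one_div]
  calc _ ≤ (1 - (Υ ^ 3)⁻¹) ^ 2 * ((1 + Υ) ^ 2 / (4 * Υ)) * (x ⬝ᵥ x) :=
        dotProduct_scaledCentering_gram_mulVec_le hs hp1
          (fun i j => (hp2 i j).trans_eq (mul_div_assoc ..)) x
    _ ≤ _ := by
        gcongr
        · exact dotProduct_self_star_nonneg x
        · exact sq_mul_one_add_sq_div_le hr₀ (sub_le_self _ (by positivity)) hΥ₁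

end CollapsedGibbs
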